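/- Let G_L be the MLP digraph with L layers K_1, …, K_L, let 0 ≤ j and 2 ≤ m ≤ L, and let γ ∈ Ω_j(G_L) be a linear combination of allowed elementary j-paths all of whose initial vertices lie in K_m, with ∂_j γ = 0. Then for any z' ∈ K_{m−1}, the join z'γ lies in Ω_{j+1}(G_L) and ∂_{j+1}(z'γ) = γ. -/

import Mathlib

open Finsupp Submodule LinearMap

/-- Chain groups for (reduced) path homology: degree `0` is `Λ₋₁ = K`; degree `p+1` is
`Λ_p`, the free `K`-vector space on elementary `p`-paths `(x_0, …, x_p)` over `X`. -/
def PChain (K : Type) [Field K] (X : Type) : ℕ → Type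
  | 0 => K
  | p + 1 => (Fin (p + 1) → X) →₀ K

variable (K : Type) [Field K] (X : Type)

noncomputable instance instPChainAddCommGroup : ∀ n, AddCommGroup (PChain K X n)
  | 0 => inferInstanceAs (AddCommGroup K)
  | (p + 1) => inferInstanceAs (AddCommGroup ((Fin (p + 1) → X) →₀ K))

noncomputable instance instPChainModule : ∀ n, Module K (PChain K X n)
  | 0 => inferInstanceAs (Module K K)
  | (p + 1) => inferInstanceAs (Module K ((Fin (p + 1) → X) →₀ K))

/-- The boundary map `∂ : Λ_p → Λ_{p-1}`; in lowest degree it is the augmentation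
`Λ_0 → K` sending each vertex to `1`. -/
noncomputable def pBoundary : ∀ n, PChain K X (n + 1) →ₗ[K] PChain K X n
  | 0 => Finsupp.lsum K fun _ => LinearMap.id
  | (p + 1) =>
      Finsupp.lsum K fun x => LinearMap.toSpanSingleton K _
        (∑ i : Fin (p + 2), ((-1 : K) ^ (i : ℕ)) • Finsupp.single (x ∘ i.succAbove) (1 : K))

/-- The join (concatenation) of chains, extended bilinearly; joining with a scalar
(degree `0` chain, i.e. an element of `Λ₋₁ = K`) is scalar multiplication. -/
noncomputable def pJoin : ∀ m n, PChain K X m →ₗ[K] PChain K X n →ₗ[K] PChain K X (m + n)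
  | m, 0 => (LinearMap.lsmul K (PChain K X m)).flip
  | 0, n + 1 =>
      (LinearMap.lsmul K (PChain K X (0 + (n + 1)))).compl₂
        (Finsupp.lmapDomain K K fun g => g ∘ (finCongr (show 0 + (n + 1) = n + 1 by omega)))
  | m + 1, n + 1 =>
      show ((Fin (m + 1) → X) →₀ K) →ₗ[K] ((Fin (n + 1) → X) →₀ K) →ₗ[K]
          ((Fin ((m + 1) + (n + 1)) → X) →₀ K) from
        Finsupp.lsum K fun x => LinearMap.toSpanSingleton K _
          (Finsupp.lsum K fun y => LinearMap.toSpanSingleton K _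
            (Finsupp.single (Fin.append x y) (1 : K)))

/-- Transport of chains along an equality of degrees. -/
noncomputable def pCast {m n : ℕ} (h : m = n) : PChain K X m ≃ₗ[K] PChain K X n := by
  subst h; exact LinearEquiv.refl K _

/-- An elementary `p`-path is allowed in a digraph (with vertex set `S ⊆ X` and edge
relation `E`) if all its vertices lie in `S` and all its consecutive pairs are edges. -/
def IsAllowed (S : Set X) (E : X → X → Prop) (p : ℕ) (x : Fin (p + 1) → X) : Prop :=
  (∀ k, x k ∈ S) ∧ ∀ i : Fin p, E (x i.castSucc) (x i.succ)

/-- The space `A_p` of allowed `p`-paths (in chain degree `p+1`); `A₋₁ = K`. -/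
noncomputable def allowedSub (S : Set X) (E : X → X → Prop) : ∀ n, Submodule K (PChain K X n)
  | 0 => ⊤
  | p + 1 => Finsupp.supported K K {x | IsAllowed X S E p x}

/-- The space `Ω_p` of ∂-invariant allowed `p`-paths (in chain degree `p+1`). -/
noncomputable def omegaSub (S : Set X) (E : X → X → Prop) : ∀ n, Submodule K (PChain K X n)
  | 0 => ⊤
  | p + 1 => allowedSub K X S E (p + 1) ⊓
      Submodule.comap (pBoundary K X p) (allowedSub K X S E p)

/-- The rank of the reduced path homology `H_p^Ξ = ker(∂_p|_{Ω_p}) / im(∂_{p+1}|_{Ω_{p+1}})`,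
realized as the image of the cycles in the quotient of the ambient chain space by the
boundaries (the boundaries form a subspace of the cycles). -/
noncomputable def pathHomRank (S : Set X) (E : X → X → Prop) (p : ℕ) : Cardinal :=
  Module.rank K
    (Submodule.map (Submodule.map (pBoundary K X (p + 1)) (omegaSub K X S E (p + 2))).mkQ
      (omegaSub K X S E (p + 1) ⊓ LinearMap.ker (pBoundary K X p)))

/-- A directed `p`-simplex: a sequence of vertices with an edge `x i → x j` whenever `i < j`. -/
def IsDirSimplex (E : X → X → Prop) (p : ℕ) (x : Fin (p + 1) → X) : Prop :=
  ∀ i j : Fin (p + 1), i < j → E (x i) (x j)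

/-- The free `K`-vector space `F_p` on directed `p`-simplices (in chain degree `p+1`). -/
def dfcSub (E : X → X → Prop) (p : ℕ) : Submodule K (PChain K X (p + 1)) :=
  Finsupp.supported K K {x | IsDirSimplex X E p x}

/-- The rank of the directed flag complex homology
`H_p^F = ker(∂_p|_{F_p}) / im(∂_{p+1}|_{F_{p+1}})` (with `F₋₁ = 0`, so in degree `0` the
cycles are all of `F_0`), realized as the image of the cycles in the quotient of the
ambient chain space by the boundaries. -/
noncomputable def dfcHomRank (E : X → X → Prop) : ℕ → Cardinal
  | 0 => Module.rank K
      (Submodule.map (Submodule.map (pBoundary K X 1) (dfcSub K X E 1)).mkQ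
        (dfcSub K X E 0))
  | p + 1 => Module.rank K
      (Submodule.map (Submodule.map (pBoundary K X (p + 2)) (dfcSub K X E (p + 2))).mkQ
        (dfcSub K X E (p + 1) ⊓ LinearMap.ker (pBoundary K X (p + 1))))

/-- The adjacency relation of the underlying undirected graph of a digraph. -/
def UAdj (E : X → X → Prop) (v w : X) : Prop := E v w ∨ E w v

/-- The simplicial boundary `∂[v,v'] = v' - v` on the free space on ordered pairs. -/
noncomputable def simpD : ((X × X) →₀ K) →ₗ[K] (X →₀ K) :=
  Finsupp.lsum K fun e => LinearMap.toSpanSingleton K _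
    (Finsupp.single e.2 (1 : K) - Finsupp.single e.1 (1 : K))

/-- The free `K`-vector space on the oriented edges of the underlying undirected graph. -/
def edgeSub (E : X → X → Prop) : Submodule K ((X × X) →₀ K) :=
  Finsupp.supported K K {e : X × X | UAdj X E e.1 e.2}

/-- The span of the relations `[v,v'] + [v',v]` (encoding `[v,v'] = -[v',v]`). -/
noncomputable def relSub (E : X → X → Prop) : Submodule K ((X × X) →₀ K) :=
  Submodule.span K {c | ∃ v w, UAdj X E v w ∧
    c = Finsupp.single (v, w) (1 : K) + Finsupp.single (w, v) (1 : K)}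

/-- The rank of the simplicial homology `H_p^Δ` of the underlying undirected graph, viewed
as a simplicial complex: `C_0^Δ` is free on vertices, `C_1^Δ` is free on oriented edges
modulo the relations `[v,v'] = -[v',v]`, and `C_p^Δ = 0` for `p ≥ 2`. Since `C_2^Δ = 0`,
`H_1^Δ = ker ∂_1 ⊆ C_1^Δ` is the image of `{c ∈ edgeSub : ∂ c = 0}` in the quotient by the
relations (which are themselves cycles supported on edges). -/
noncomputable def simpHomRank (E : X → X → Prop) : ℕ → Cardinal
  | 0 => Module.rank K ((X →₀ K) ⧸ Submodule.map (simpD K X) (edgeSub K X E))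
  | 1 => Module.rank K
      (Submodule.map (relSub K X E).mkQ (edgeSub K X E ⊓ LinearMap.ker (simpD K X)))
  | _ + 2 => 0

/-- The vertex set of an MLP with `L` layers, the `i`-th layer (`0`-indexed) of width `n i`. -/
def MLPVertex (L : ℕ) (n : ℕ → ℕ) : Type := (i : Fin L) × Fin (n i)

/-- The edges of the MLP digraph: all arcs from layer `i` to layer `i+1`. -/
def MLPEdge (L : ℕ) (n : ℕ → ℕ) (v w : MLPVertex L n) : Prop :=
  (w.1 : ℕ) = (v.1 : ℕ) + 1

/-- The `i`-th layer `K_i` of the MLP, `1`-indexed (so `i` ranges over `1, …, L`). -/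
def MLPLayer (L : ℕ) (n : ℕ → ℕ) (i : ℕ) : Set (MLPVertex L n) :=
  {v | (v.1 : ℕ) + 1 = i}

/-- The degree-`1` chain (i.e. elementary `0`-path) corresponding to a single vertex. -/
noncomputable def vertChain (x : X) : PChain K X 1 := Finsupp.single (fun _ => x) (1 : K)

/-- The subspace of `Λ_p` of chains supported on a given set of elementary `p`-paths. -/
def suppSub (p : ℕ) (s : Set (Fin (p + 1) → X)) : Submodule K (PChain K X (p + 1)) :=
  Finsupp.supported K K s

section Aux

/-- Prepend a fixed vertex to every path of a chain. -/
noncomputable def consMap (z : X) : ∀ p, PChain K X p →ₗ[K] PChain K X (p + 1)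
  | 0 => LinearMap.toSpanSingleton K _ (Finsupp.single (fun _ => z) (1 : K))
  | q + 1 => Finsupp.lmapDomain K K
      (fun x : Fin (q + 1) → X => (Fin.cons z x : Fin (q + 2) → X))

lemma pCast_rfl (a : ℕ) (h : a = a) (c : PChain K X a) : pCast K X h c = c := rfl

lemma mem_allowedSub_pCast {S : Set X} {E : X → X → Prop} {a b : ℕ} (h : a = b)
    {c : PChain K X a} (hc : c ∈ allowedSub K X S E a) :
    pCast K X h c ∈ allowedSub K X S E b := by subst h; exact hc

lemma pBoundary_pCast (a b : ℕ) (h : a = b) (h' : a + 1 = b + 1) (c : PChain K X (a + 1)) :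
    pBoundary K X b (pCast K X h' c) = pCast K X h (pBoundary K X a c) := by
  subst h; rfl

lemma pCast_eq_mapDomain (a b : ℕ) (h : a + 1 = b + 1)
    (f : (Fin (a + 1) → X) → (Fin (b + 1) → X))
    (hf : ∀ x k, f x k = x (Fin.cast (by omega) k)) (c : (Fin (a + 1) → X) →₀ K) :
    pCast K X h (c : PChain K X (a + 1)) =
      (Finsupp.mapDomain f c : PChain K X (b + 1)) := by
  obtain rfl : a = b := by omega
  have hfid : f = id := by
    funext x; funext k; rw [hf]; exact congrArg x (Fin.ext rfl)
  rw [hfid, Finsupp.mapDomain_id]; rfl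

lemma cons_comp_succAbove (p : ℕ) (z : X) (x : Fin (p + 1) → X) (i : Fin (p + 1)) :
    (Fin.cons z x : Fin (p + 2) → X) ∘ (Fin.succ i).succAbove =
      (Fin.cons z (x ∘ i.succAbove) : Fin (p + 1) → X) := by
  funext k
  cases k using Fin.cases with
  | zero => simp
  | succ k => simp [Fin.succ_succAbove_succ]

lemma pBoundary_single (p : ℕ) (w : Fin (p + 2) → X) (b : K) :
    pBoundary K X (p + 1) (Finsupp.single w b : PChain K X (p + 2)) =
      b • ∑ i : Fin (p + 2), ((-1 : K) ^ (i : ℕ)) •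
        (Finsupp.single (w ∘ i.succAbove) (1 : K) : PChain K X (p + 1)) := by
  show (Finsupp.lsum K fun x => LinearMap.toSpanSingleton K _
      (∑ i : Fin (p + 2), ((-1 : K) ^ (i : ℕ)) • Finsupp.single (x ∘ i.succAbove) (1 : K)))
      (Finsupp.single w b) = _
  rw [Finsupp.lsum_single, LinearMap.toSpanSingleton_apply]

lemma scalar_shuffle {M : Type} [AddCommGroup M] [Module K M] (b : K) (u : M) (p : ℕ)
    (s : Fin (p + 1) → M) :
    b • (((-1 : K) ^ ((0 : Fin (p + 2)) : ℕ)) • u +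
        ∑ i : Fin (p + 1), ((-1 : K) ^ ((Fin.succ i : Fin (p + 2)) : ℕ)) • s i) =
      b • u - b • ∑ i : Fin (p + 1), ((-1 : K) ^ (i : ℕ)) • s i := by
  rw [smul_add, Finset.smul_sum, Finset.smul_sum, sub_eq_add_neg, ← Finset.sum_neg_distrib]
  simp only [Fin.val_zero, pow_zero, one_smul, Fin.val_succ, pow_succ, smul_smul]
  congr 1
  refine Finset.sum_congr rfl fun i _ => ?_
  rw [← neg_smul]
  congr 1
  ring

lemma consMap_bdry_single (p : ℕ) (z : X) (x : Fin (p + 1) → X) (b : K) :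
    consMap K X z p (pBoundary K X p (Finsupp.single x b : PChain K X (p + 1))) =
      b • ∑ i : Fin (p + 1), ((-1 : K) ^ (i : ℕ)) •
        (Finsupp.single
          (Fin.cons z (x ∘ i.succAbove) : Fin (p + 1) → X) (1 : K) : PChain K X (p + 1)) := by
  cases p with
  | zero =>
      have h1 : pBoundary K X 0 (Finsupp.single x b : PChain K X 1) = b := by
        show (Finsupp.lsum K fun _ => (LinearMap.id : K →ₗ[K] K)) (Finsupp.single x b) = b
        rw [Finsupp.lsum_single]; rfl
      rw [h1]
      have h2 : ∀ i : Fin 1, (Fin.cons z (x ∘ i.succAbove) : Fin 1 → X) = fun _ => z := by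
        intro i; funext k
        cases k using Fin.cases with
        | zero => simp
        | succ k => exact k.elim0
      show LinearMap.toSpanSingleton K _ (Finsupp.single (fun _ => z) (1 : K)) b = _
      rw [LinearMap.toSpanSingleton_apply]
      rw [Fin.sum_univ_one]
      simp only [h2, Fin.val_zero, pow_zero, one_smul]
  | succ q =>
      rw [pBoundary_single]
      show Finsupp.lmapDomain K K _ _ = _
      rw [map_smul, map_sum]
      simp only [map_smul, Finsupp.lmapDomain_apply, Finsupp.mapDomain_single]

lemma bdry_cons_single (p : ℕ) (z : X) (x : Fin (p + 1) → X) (b : K) :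
    pBoundary K X (p + 1)
        (Finsupp.single (Fin.cons z x) b : PChain K X (p + 2)) =
      (by exact Finsupp.single x b : PChain K X (p + 1)) -
        consMap K X z p (pBoundary K X p (Finsupp.single x b : PChain K X (p + 1))) := by
  rw [pBoundary_single, Fin.sum_univ_succ, consMap_bdry_single]
  have h0 : (Fin.cons z x : Fin (p + 2) → X) ∘ (0 : Fin (p + 2)).succAbove = x := by
    funext k; simp
  rw [h0]
  simp only [cons_comp_succAbove]
  rw [scalar_shuffle]
  congr 1
  rw [Finsupp.smul_single, smul_eq_mul, mul_one]

lemma bdry_consMap (p : ℕ) (z : X) (c : (Fin (p + 1) → X) →₀ K) :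
    pBoundary K X (p + 1) (consMap K X z (p + 1) (c : PChain K X (p + 1))) =
      (by exact c : PChain K X (p + 1)) -
        consMap K X z p (pBoundary K X p (c : PChain K X (p + 1))) := by
  induction c using Finsupp.induction_linear with
  | zero =>
      rw [show (0 : (Fin (p + 1) → X) →₀ K) = (0 : PChain K X (p + 1)) from rfl]
      simp
  | add f g hf hg =>
      have key : ∀ u v : PChain K X (p + 1),
          pBoundary K X (p + 1) (consMap K X z (p + 1) u) = u - consMap K X z p (pBoundary K X p u) →
          pBoundary K X (p + 1) (consMap K X z (p + 1) v) = v - consMap K X z p (pBoundary K X p v) →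
          pBoundary K X (p + 1) (consMap K X z (p + 1) (u + v)) =
            (u + v) - consMap K X z p (pBoundary K X p (u + v)) := by
        intro u v hu hv
        rw [map_add, map_add, map_add, map_add, hu, hv]
        abel
      exact key f g hf hg
  | single a b =>
      have h1 : consMap K X z (p + 1) (Finsupp.single a b : PChain K X (p + 1)) =
          (Finsupp.single (Fin.cons z a) b : PChain K X (p + 2)) := by
        show Finsupp.lmapDomain K K _ _ = _
        rw [Finsupp.lmapDomain_apply, Finsupp.mapDomain_single]
      rw [h1, bdry_cons_single]

end Aux

/-- Let `γ ∈ Ω_j(G_L)` be a linear combination of allowed elementary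
`j`-paths all of whose initial vertices lie in layer `K_m` (`2 ≤ m ≤ L`), with `∂_j γ = 0`.
Then for any vertex `z' ∈ K_{m-1}`, the join `z'γ` lies in `Ω_{j+1}(G_L)` and
`∂_{j+1}(z'γ) = γ`. -/
theorem mlp_prepend_vertex_boundary (K : Type) [Field K] (L : ℕ) (hL : 1 ≤ L) (n : ℕ → ℕ)
    (hn : ∀ i, 1 ≤ n i) (j m : ℕ) (hm1 : 2 ≤ m) (hm2 : m ≤ L)
    (γ : PChain K (MLPVertex L n) (j + 1))
    (hΩ : γ ∈ omegaSub K (MLPVertex L n) Set.univ (MLPEdge L n) (j + 1))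
    (hinit : γ ∈ suppSub K (MLPVertex L n) j
      {x : Fin (j + 1) → MLPVertex L n | x 0 ∈ MLPLayer L n m})
    (hker : pBoundary K (MLPVertex L n) j γ = 0)
    (z' : MLPVertex L n) (hz' : z' ∈ MLPLayer L n (m - 1)) :
    pJoin K (MLPVertex L n) 1 (j + 1) (vertChain K (MLPVertex L n) z') γ ∈
      omegaSub K (MLPVertex L n) Set.univ (MLPEdge L n) (1 + j + 1) ∧
    pBoundary K (MLPVertex L n) (1 + j)
        (pJoin K (MLPVertex L n) 1 (j + 1) (vertChain K (MLPVertex L n) z') γ) =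
      pCast K (MLPVertex L n) (show j + 1 = 1 + j by omega) γ := by
  classical
  -- Step 1: identify the join with a cast of `consMap`.
  have hJ : pJoin K (MLPVertex L n) 1 (j + 1) (vertChain K (MLPVertex L n) z') γ =
      pCast K (MLPVertex L n) (show j + 1 + 1 = 1 + j + 1 by omega)
        (consMap K (MLPVertex L n) z' (j + 1) γ) := by
    have e1 : pJoin K (MLPVertex L n) 1 (j + 1) (vertChain K (MLPVertex L n) z') γ =
        (Finsupp.mapDomain (fun x : Fin (j + 1) → MLPVertex L n =>
            Fin.append (m := 1) (n := j + 1) (fun _ : Fin 1 => z') x) γ :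
            PChain K (MLPVertex L n) (1 + j + 1)) := by
      show (Finsupp.lsum K fun x : Fin 1 → MLPVertex L n => LinearMap.toSpanSingleton K _
          (Finsupp.lsum K fun y : Fin (j + 1) → MLPVertex L n =>
            LinearMap.toSpanSingleton K _
              (Finsupp.single (Fin.append (m := 1) (n := j + 1) x y) (1 : K))))
          (Finsupp.single (fun _ => z') (1 : K)) γ = _
      rw [Finsupp.lsum_single, LinearMap.toSpanSingleton_apply, one_smul]
      have e2 : (Finsupp.lsum K fun y : Fin (j + 1) → MLPVertex L n =>
          LinearMap.toSpanSingleton K ((Fin (1 + (j + 1)) → MLPVertex L n) →₀ K)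
            (Finsupp.single
              (Fin.append (m := 1) (n := j + 1) (fun _ : Fin 1 => z') y) (1 : K)))
          = Finsupp.lmapDomain K K (fun y : Fin (j + 1) → MLPVertex L n =>
              Fin.append (m := 1) (n := j + 1) (fun _ : Fin 1 => z') y) := by
        apply Finsupp.lhom_ext
        intro y b
        rw [Finsupp.lsum_single, LinearMap.toSpanSingleton_apply,
          Finsupp.lmapDomain_apply, Finsupp.mapDomain_single, Finsupp.smul_single,
          smul_eq_mul, mul_one]
      rw [e2]; rfl
    rw [e1]
    have e3 : consMap K (MLPVertex L n) z' (j + 1) γ =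
        (Finsupp.mapDomain (fun x : Fin (j + 1) → MLPVertex L n =>
            (Fin.cons z' x : Fin (j + 2) → MLPVertex L n)) γ :
            PChain K (MLPVertex L n) (j + 1 + 1)) := by
      show Finsupp.lmapDomain K K _ _ = _
      rfl
    rw [e3, pCast_eq_mapDomain K (MLPVertex L n) (j + 1) (1 + j) (by omega)
      (fun y : Fin (j + 1 + 1) → MLPVertex L n =>
        (fun k : Fin (1 + j + 1) => y (Fin.cast (by omega) k)))
      (fun y k => rfl)]
    refine Eq.trans ?_ Finsupp.mapDomain_comp
    refine congrArg (fun f : (Fin (j + 1) → MLPVertex L n) → (Fin (1 + j + 1) → MLPVertex L n)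
      => Finsupp.mapDomain f γ) ?_
    funext x
    show Fin.append (m := 1) (n := j + 1) (fun _ : Fin 1 => z') x = _
    rw [Fin.append_left_eq_cons]
    rfl
  -- Step 2: the boundary computation.
  have hDγ : pBoundary K (MLPVertex L n) (j + 1) (consMap K (MLPVertex L n) z' (j + 1) γ) =
      γ := by
    rw [bdry_consMap K (MLPVertex L n) j z' γ]
    show γ - consMap K (MLPVertex L n) z' j (pBoundary K (MLPVertex L n) j γ) = γ
    rw [hker, map_zero, sub_zero]
  have hB : pBoundary K (MLPVertex L n) (1 + j)
      (pJoin K (MLPVertex L n) 1 (j + 1) (vertChain K (MLPVertex L n) z') γ) =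
      pCast K (MLPVertex L n) (show j + 1 = 1 + j by omega) γ := by
    rw [hJ, pBoundary_pCast K (MLPVertex L n) (j + 1) (1 + j) (by omega), hDγ]
  -- Step 3: allowedness of the join.
  have hγA : (↑γ.support : Set (Fin (j + 1) → MLPVertex L n)) ⊆
      {x | IsAllowed (MLPVertex L n) Set.univ (MLPEdge L n) j x} :=
    (Finsupp.mem_supported K γ).mp hΩ.1
  have hγI : (↑γ.support : Set (Fin (j + 1) → MLPVertex L n)) ⊆
      {x : Fin (j + 1) → MLPVertex L n | x 0 ∈ MLPLayer L n m} :=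
    (Finsupp.mem_supported K γ).mp hinit
  have hmem1 : pJoin K (MLPVertex L n) 1 (j + 1) (vertChain K (MLPVertex L n) z') γ ∈
      allowedSub K (MLPVertex L n) Set.univ (MLPEdge L n) (1 + j + 1) := by
    rw [hJ]
    apply mem_allowedSub_pCast
    show consMap K (MLPVertex L n) z' (j + 1) γ ∈
      Finsupp.supported K K {x | IsAllowed (MLPVertex L n) Set.univ (MLPEdge L n) (j + 1) x}
    apply (Finsupp.mem_supported K _).mpr
    have e3 : consMap K (MLPVertex L n) z' (j + 1) γ = Finsupp.mapDomain
        (fun x : Fin (j + 1) → MLPVertex L n =>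
          (Fin.cons z' x : Fin (j + 2) → MLPVertex L n)) γ := by
      show Finsupp.lmapDomain K K _ _ = _
      rfl
    rw [e3]
    refine subset_trans (fun w hw => ?_) (le_refl _)
    have hw' := Finsupp.mapDomain_support hw
    simp only [Finset.coe_image, Set.mem_image, Finset.mem_image] at hw'
    obtain ⟨x, hx, rfl⟩ := hw'
    have hxA := hγA hx
    have hxI := hγI hx
    refine ⟨fun k => trivial, fun i => ?_⟩
    cases i using Fin.cases with
    | zero =>
        have h1 : (Fin.cons z' x : Fin (j + 2) → MLPVertex L n) (Fin.castSucc 0) = z' := by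
          simp
        have h2 : (Fin.cons z' x : Fin (j + 2) → MLPVertex L n) (Fin.succ 0) = x 0 := by
          rw [Fin.cons_succ]
        rw [h1, h2]
        show ((x 0).1 : ℕ) = (z'.1 : ℕ) + 1
        have hz'' : (z'.1 : ℕ) + 1 = m - 1 := hz'
        have hx0 : ((x 0).1 : ℕ) + 1 = m := hxI
        omega
    | succ i =>
        have h1 : (Fin.cons z' x : Fin (j + 2) → MLPVertex L n) (Fin.castSucc i.succ) =
            x (Fin.castSucc i) := by
          rw [← Fin.succ_castSucc, Fin.cons_succ]
        have h2 : (Fin.cons z' x : Fin (j + 2) → MLPVertex L n) (Fin.succ i.succ) =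
            x i.succ := by
          rw [Fin.cons_succ]
        rw [h1, h2]
        exact hxA.2 i
  have hmem2 : pJoin K (MLPVertex L n) 1 (j + 1) (vertChain K (MLPVertex L n) z') γ ∈
      Submodule.comap (pBoundary K (MLPVertex L n) (1 + j))
        (allowedSub K (MLPVertex L n) Set.univ (MLPEdge L n) (1 + j)) := by
    have h5 := mem_allowedSub_pCast K (MLPVertex L n) (show j + 1 = 1 + j by omega)
      (S := Set.univ) (E := MLPEdge L n) hΩ.1
    exact Submodule.mem_comap.mpr (hB ▸ h5)
  exact ⟨Submodule.mem_inf.mpr ⟨hmem1, hmem2⟩, hB⟩
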